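/- Let ℜ be a nonempty loc-deterministic set of P-rules satisfying Assumptions 1 and 2 in which every constant occurs, and let U be an infinite subset of 𝔘_loc. Every equality-free sequent λ ⊢_ℜ^V γ that is not valid admits a counter-model (s,h) such that dom(h) ∪ s(V_loc) ⊆ U. -/

import Mathlib

open scoped Classical

namespace SLID

/-! ## Signatures, terms and formulas -/

/-- A signature: a set of sorts with a distinguished sort `loc` of memory locations,
predicate symbols with profiles (the first parameter being of sort `loc`),
and constants of each sort (no constants of sort `loc`). -/
structure Sig : Type 1 where
  Srt : Type
  loc : Srt
  Pred : Type
  arity : Pred → ℕ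
  arity_pos : ∀ p, 0 < arity p
  psort : Pred → ℕ → Srt
  psort_zero : ∀ p, psort p 0 = loc
  Const : Srt → Type
  noLocConst : IsEmpty (Const loc)

variable {σ : Sig}

/-- Terms: variables of each sort (a countably infinite supply, indexed by `ℕ`)
and constants. -/
inductive Term (σ : Sig) : Type where
  | var (s : σ.Srt) (n : ℕ) : Term σ
  | cst (s : σ.Srt) (c : σ.Const s) : Term σ

/-- The sort of a term. -/
def Term.sort : Term σ → σ.Srt
  | .var s _ => s
  | .cst s _ => s

/-- Variables, as (sort, index) pairs. -/
abbrev Vr (σ : Sig) : Type := σ.Srt × ℕ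

/-- The set of variables of a term. -/
def Term.varSet : Term σ → Set (Vr σ)
  | .var s n => {(s, n)}
  | .cst _ _ => ∅

/-- Spatial atoms: points-to atoms `x ↦ (t₁,…,tₖ)` and predicate atoms
`p(x, t₂,…,tₙ)`.  The root `x` is a variable of sort `loc`, represented
by its index. -/
inductive SAtom (σ : Sig) : Type where
  | pto (x : ℕ) (ts : List (Term σ)) : SAtom σ
  | pred (p : σ.Pred) (x : ℕ) (args : List (Term σ)) : SAtom σ

/-- The root of a spatial atom. -/
def SAtom.root : SAtom σ → ℕ
  | .pto x _ => x
  | .pred _ x _ => x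

/-- The term at position `i` (0-indexed; position `0` is the root) of a
predicate atom. -/
def SAtom.argAt : SAtom σ → ℕ → Option (Term σ)
  | .pred _ x _, 0 => some (Term.var σ.loc x)
  | .pred _ _ args, j + 1 => args[j]?
  | .pto _ _, _ => none

/-- The set of terms occurring in a spatial atom. -/
def SAtom.termSet : SAtom σ → Set (Term σ)
  | .pto x ts => insert (Term.var σ.loc x) {t | t ∈ ts}
  | .pred _ x args => insert (Term.var σ.loc x) {t | t ∈ args}

/-- The set of variables of a spatial atom. -/
def SAtom.varSet (a : SAtom σ) : Set (Vr σ) := ⋃ t ∈ SAtom.termSet a, Term.varSet t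

/-- Pure atoms: equations `t ≈ u` and disequations `t ≉ u`. -/
inductive PAtom (σ : Sig) : Type where
  | eq (t u : Term σ) : PAtom σ
  | ne (t u : Term σ) : PAtom σ

/-- The set of terms occurring in a pure atom. -/
def PAtom.termSet : PAtom σ → Set (Term σ)
  | .eq t u => {t, u}
  | .ne t u => {t, u}

/-- The set of variables of a pure atom. -/
def PAtom.varSet (a : PAtom σ) : Set (Vr σ) := ⋃ t ∈ PAtom.termSet a, Term.varSet t

/-- Spatial formulas: finite `*`-conjunctions of spatial atoms, taken modulo
associativity-commutativity of `*` (hence multisets); `emp` is `0` and `*` is `+`. -/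
abbrev Spatial (σ : Sig) : Type := Multiset (SAtom σ)

/-- Pure formulas: finite conjunctions of equations and disequations, taken modulo
associativity-commutativity of `∧` (hence multisets); `⊤` is `0` and `∧` is `+`. -/
abbrev PureF (σ : Sig) : Type := Multiset (PAtom σ)

/-- A symbolic heap `φ ⋏ ξ` with `φ` spatial and `ξ` pure. -/
structure SymHeap (σ : Sig) : Type where
  sp : Spatial σ
  pu : PureF σ

/-- The set of variables of a spatial formula. -/
def Spatial.varSet (φ : Spatial σ) : Set (Vr σ) := {v | ∃ a ∈ φ, v ∈ SAtom.varSet a}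

/-- The set of variables of a pure formula. -/
def PureF.varSet (ξ : PureF σ) : Set (Vr σ) := {v | ∃ a ∈ ξ, v ∈ PAtom.varSet a}

/-- The set of variables of a symbolic heap. -/
def SymHeap.varSet (l : SymHeap σ) : Set (Vr σ) := Spatial.varSet l.sp ∪ PureF.varSet l.pu

/-- The set of terms occurring in a symbolic heap. -/
def SymHeap.termSet (l : SymHeap σ) : Set (Term σ) :=
  {t | ∃ a ∈ l.sp, t ∈ SAtom.termSet a} ∪ {t | ∃ a ∈ l.pu, t ∈ PAtom.termSet a}

/-- `alloc(φ)`: the multiset of roots of the spatial atoms of `φ`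
(as indices of variables of sort `loc`). -/
def alloc (φ : Spatial σ) : Multiset ℕ := φ.map SAtom.root

/-- `alloc(λ)` for a symbolic heap `λ`. -/
def SymHeap.alloc (l : SymHeap σ) : Multiset ℕ := SLID.alloc l.sp

/-- Sort-correctness of a pure atom. -/
def PAtom.WF : PAtom σ → Prop
  | .eq t u => Term.sort t = Term.sort u
  | .ne t u => Term.sort t = Term.sort u

/-- Sort-correctness of a spatial atom. -/
def SAtom.WF : SAtom σ → Prop
  | .pto _ _ => True
  | .pred p _ args => args.length + 1 = σ.arity p ∧
      ∀ (i : ℕ) (hi : i < args.length), Term.sort (args[i]'hi) = σ.psort p (i + 1)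

/-- Sort-correctness of a symbolic heap. -/
def SymHeap.WF (l : SymHeap σ) : Prop := (∀ a ∈ l.sp, SAtom.WF a) ∧ (∀ a ∈ l.pu, PAtom.WF a)

/-! ## Inductive rules -/

/-- An inductive rule `p(x₁,…,xₙ) ⇐ λ`: the parameters `x₁,…,xₙ` are pairwise
distinct variables of the profile sorts of the head `p`, and the body `λ` is a
symbolic heap. -/
structure Rule (σ : Sig) : Type where
  head : σ.Pred
  param : ℕ → ℕ
  param_inj : ∀ i j, i < σ.arity head → j < σ.arity head → i ≠ j →
    ((σ.psort head i, param i) : Vr σ) ≠ ((σ.psort head j, param j) : Vr σ)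
  body : SymHeap σ
  body_wf : SymHeap.WF body

/-- The `i`-th parameter of a rule, as a term. -/
def Rule.paramTerm (r : Rule σ) (i : ℕ) : Term σ := Term.var (σ.psort r.head i) (r.param i)

/-- The set of parameters of a rule, as terms. -/
def Rule.paramTermSet (r : Rule σ) : Set (Term σ) := {t | ∃ i < σ.arity r.head, t = r.paramTerm i}

/-- The set of parameters of a rule, as variables. -/
def Rule.paramVarSet (r : Rule σ) : Set (Vr σ) :=
  {v | ∃ i < σ.arity r.head, v = ((σ.psort r.head i, r.param i) : Vr σ)}

/-- The set of terms occurring in (the body of) a rule. -/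
def Rule.termSet (r : Rule σ) : Set (Term σ) := SymHeap.termSet r.body

/-- P-rules: rules of the form
`p(x₁,…,xₙ) ⇐ (x₁ ↦ (y₁,…,yₖ) * q₁(z₁,u⃗₁) * ⋯ * qₘ(zₘ,u⃗ₘ)) ⋏ ξ` where
(1) `ξ` is a conjunction of disequations `u ≉ v` with `u ∈ {x₁,…,xₙ,y₁,…,yₖ}`
    and `v ∈ {y₁,…,yₖ} ∖ {x₁,…,xₙ}`;
(2) `{z₁,…,zₘ} = ({y₁,…,yₖ} ∖ {x₁,…,xₙ}) ∩ V_loc`, with `z₁,…,zₘ` pairwise distinct;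
(3) every element of each `u⃗ᵢ` is a parameter, one of the `yⱼ`, or a constant. -/
def Rule.IsPRule (r : Rule σ) : Prop :=
  ∃ (ys : List (Term σ)) (ps : Multiset (SAtom σ)),
    r.body.sp = (SAtom.pto (r.param 0) ys) ::ₘ ps ∧
    (∀ a ∈ ps, ∃ (q : σ.Pred) (z : ℕ) (args : List (Term σ)), a = SAtom.pred q z args) ∧
    (∀ pa ∈ r.body.pu, ∃ u v : Term σ, pa = PAtom.ne u v ∧
      (u ∈ Rule.paramTermSet r ∨ u ∈ ys) ∧ (v ∈ ys ∧ v ∉ Rule.paramTermSet r)) ∧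
    ({t : Term σ | ∃ a ∈ ps, t = Term.var σ.loc (SAtom.root a)} =
      {t : Term σ | t ∈ ys ∧ t ∉ Rule.paramTermSet r ∧ Term.sort t = σ.loc}) ∧
    Multiset.Nodup (Multiset.map SAtom.root ps) ∧
    (∀ a ∈ ps, ∀ (q : σ.Pred) (z : ℕ) (args : List (Term σ)), a = SAtom.pred q z args →
      ∀ t ∈ args, t ∈ Rule.paramTermSet r ∨ t ∈ ys ∨ ∃ (s : σ.Srt) (c : σ.Const s), t = Term.cst s c)

/-- Productive predicate symbols (least fixpoint): `p` is productive w.r.t. `R`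
if `R` contains a rule for `p` all of whose body predicates are productive. -/
inductive Productive (R : Set (Rule σ)) : σ.Pred → Prop where
  | intro (r : Rule σ) : r ∈ R →
      (∀ (q : σ.Pred) (z : ℕ) (args : List (Term σ)),
        SAtom.pred q z args ∈ r.body.sp → Productive R q) →
      Productive R r.head

/-- `out_ℜ(p)` (0-indexed): outgoing parameter indices, as a least fixpoint. -/
inductive OutParam (R : Set (Rule σ)) : σ.Pred → ℕ → Prop where
  | pto (r : Rule σ) (i : ℕ) (ts : List (Term σ)) :
      r ∈ R → i < σ.arity r.head → σ.psort r.head i = σ.loc →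
      SAtom.pto (r.param 0) ts ∈ r.body.sp → r.paramTerm i ∈ ts →
      OutParam R r.head i
  | pred (r : Rule σ) (i : ℕ) (q : σ.Pred) (z : ℕ) (args : List (Term σ)) (j : ℕ) :
      r ∈ R → i < σ.arity r.head → σ.psort r.head i = σ.loc →
      SAtom.pred q z args ∈ r.body.sp → OutParam R q j →
      SAtom.argAt (SAtom.pred q z args) j = some (r.paramTerm i) →
      OutParam R r.head i

/-- The relation `x →_φ y` on variables of sort `loc` (Definition of `→`):
`φ` contains a predicate atom with root `x` and `y` at an outgoing position,
or a points-to atom with root `x` and `y` in its tuple. -/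
def PathTo (R : Set (Rule σ)) (φ : Spatial σ) (x y : ℕ) : Prop :=
  (∃ ts, SAtom.pto x ts ∈ φ ∧ Term.var σ.loc y ∈ ts) ∨
  (∃ (p : σ.Pred) (args : List (Term σ)) (i : ℕ), SAtom.pred p x args ∈ φ ∧
    OutParam R p i ∧ SAtom.argAt (SAtom.pred p x args) i = some (Term.var σ.loc y))

/-! ## Substitutions and renamings -/

/-- A (sort-preserving) substitution. -/
structure Subst (σ : Sig) : Type where
  app : σ.Srt → ℕ → Term σ
  sorted : ∀ s n, Term.sort (app s n) = s

def Term.subst (θ : Subst σ) : Term σ → Term σ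
  | .var s n => θ.app s n
  | .cst s c => .cst s c

/-- The index of a variable of sort `loc` (terms of sort `loc` are always
variables, since there are no constants of sort `loc`). -/
def Term.locIdx : Term σ → ℕ
  | .var _ n => n
  | .cst _ _ => 0

def Subst.locApp (θ : Subst σ) (x : ℕ) : ℕ := Term.locIdx (θ.app σ.loc x)

def SAtom.subst (θ : Subst σ) : SAtom σ → SAtom σ
  | .pto x ts => .pto (θ.locApp x) (ts.map (Term.subst θ))
  | .pred p x args => .pred p (θ.locApp x) (args.map (Term.subst θ))

def PAtom.subst (θ : Subst σ) : PAtom σ → PAtom σ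
  | .eq t u => .eq (Term.subst θ t) (Term.subst θ u)
  | .ne t u => .ne (Term.subst θ t) (Term.subst θ u)

def SymHeap.subst (θ : Subst σ) (l : SymHeap σ) : SymHeap σ :=
  ⟨l.sp.map (SAtom.subst θ), l.pu.map (PAtom.subst θ)⟩

/-- `p(t₁,…,tₙ) ⇐_ℜ λ`: `λ` is obtained from the body of a rule of `R` for `p`
by renaming its non-parameter variables injectively to variables not occurring in
`t₁,…,tₙ`, and substituting each `tᵢ` for the `i`-th parameter. -/
def Unfolds (R : Set (Rule σ)) (p : σ.Pred) (targs : List (Term σ)) (lam : SymHeap σ) : Prop :=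
  ∃ r ∈ R, r.head = p ∧ targs.length = σ.arity p ∧
  ∃ θ : Subst σ,
    (∀ (i : ℕ) (hi : i < targs.length),
      θ.app (σ.psort p i) (r.param i) = targs[i]'hi) ∧
    (∀ v : Vr σ, v ∉ Rule.paramVarSet r →
      ∃ m : ℕ, θ.app v.1 v.2 = Term.var v.1 m ∧ ∀ t ∈ targs, (v.1, m) ∉ Term.varSet t) ∧
    (∀ v w : Vr σ, v ∉ Rule.paramVarSet r → w ∉ Rule.paramVarSet r →
      θ.app v.1 v.2 = θ.app w.1 w.2 → v = w) ∧
    lam = SymHeap.subst θ r.body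

/-- Equivalence of symbolic heaps up to an injective renaming of variables fixing
the variables in `F`. -/
def VarRenEquiv (F : Set (Vr σ)) (l1 l2 : SymHeap σ) : Prop :=
  ∃ θ : Subst σ,
    (∀ v : Vr σ, ∃ m : ℕ, θ.app v.1 v.2 = Term.var v.1 m) ∧
    (∀ v w : Vr σ, θ.app v.1 v.2 = θ.app w.1 w.2 → v = w) ∧
    (∀ v ∈ F, θ.app v.1 v.2 = Term.var v.1 v.2) ∧
    l2 = SymHeap.subst θ l1

/-! ## Interpretations, stores and heaps -/

/-- An interpretation: pairwise disjoint countably infinite universes (one per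
sort; disjointness is by construction of `Interp.Val`) together with an injective
interpretation of the constants. -/
structure Interp (σ : Sig) : Type 1 where
  U : σ.Srt → Type
  countable : ∀ s, Countable (U s)
  infinite : ∀ s, Infinite (U s)
  cval : {s : σ.Srt} → σ.Const s → U s
  cval_inj : ∀ s : σ.Srt, Function.Injective (fun c : σ.Const s => cval c)

/-- The universe `𝔘_loc` of locations. -/
abbrev Interp.Loc {σ : Sig} (I : Interp σ) : Type := I.U σ.loc

/-- The global universe `𝔘` (disjoint union of the sort universes). -/
abbrev Interp.Val {σ : Sig} (I : Interp σ) : Type := Σ s : σ.Srt, I.U s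

/-- A store maps every variable to an element of the universe of its sort
(constants are interpreted by `cval`, see `tval`). -/
abbrev Store {σ : Sig} (I : Interp σ) : Type := ∀ s : σ.Srt, ℕ → I.U s

section Stores

variable {I : Interp σ}

/-- The value of a term under a store. -/
def tval (st : Store I) : Term σ → I.Val
  | .var s n => ⟨s, st s n⟩
  | .cst s c => ⟨s, I.cval c⟩

/-- The value of a term under a store, typed by the sort of the term. -/
def tvalSorted (st : Store I) : (t : Term σ) → I.U (Term.sort t)
  | .var s n => st s n
  | .cst _ c => I.cval c

end Stores

/-- Heaps: finite partial maps from locations to finite tuples of values. -/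
def Heap {σ : Sig} (I : Interp σ) : Type :=
  { f : I.Loc → Option (List I.Val) // {l : I.Loc | f l ≠ none}.Finite }

namespace Heap

variable {I : Interp σ}

/-- The domain of a heap (the set of allocated locations). -/
def dom (h : Heap I) : Set I.Loc := {l | h.1 l ≠ none}

/-- The empty heap. -/
def empty (I : Interp σ) : Heap I :=
  ⟨fun _ => none, by
    have : {l : I.Loc | (none : Option (List I.Val)) ≠ none} = ∅ := by
      ext l; simp
    rw [this]; exact Set.finite_empty⟩

/-- Disjointness of heaps. -/
def Disj (h1 h2 : Heap I) : Prop := dom h1 ∩ dom h2 = ∅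

/-- Union of heaps (used on disjoint heaps, where it is the disjoint union `⊎`). -/
def union (h1 h2 : Heap I) : Heap I :=
  ⟨fun l => (h1.1 l).orElse fun _ => h2.1 l, by
    apply (h1.2.union h2.2).subset
    intro l hl
    simp only [Set.mem_setOf_eq] at hl
    simp only [Set.mem_union, Set.mem_setOf_eq]
    rcases e1 : h1.1 l with _ | vs
    · right
      intro e2
      rw [e1, e2] at hl
      exact hl rfl
    · left
      simp [e1]⟩

/-- The one-point heap `{l ↦ vs}`. -/
noncomputable def single (l : I.Loc) (vs : List I.Val) : Heap I :=
  ⟨fun l' => if l' = l then some vs else none, by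
    apply (Set.finite_singleton l).subset
    intro x hx
    simp only [Set.mem_setOf_eq] at hx
    simp only [Set.mem_singleton_iff]
    by_contra hne
    rw [if_neg hne] at hx
    exact hx rfl⟩

/-- `h1 ⊆ h2`: `h2 = h1 ⊎ h3` for some heap `h3` disjoint from `h1`. -/
def Sub (h1 h2 : Heap I) : Prop := ∃ h3 : Heap I, Disj h1 h3 ∧ h2 = union h1 h3

/-- The relation `ℓ →_h ℓ'`: `ℓ ∈ dom(h)` and `ℓ'` is a component (of sort `loc`)
of the tuple `h(ℓ)`. -/
def conn (h : Heap I) (l l' : I.Loc) : Prop :=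
  ∃ vs, h.1 l = some vs ∧ (⟨σ.loc, l'⟩ : I.Val) ∈ vs

/-- `ref(h)`: the set of locations occurring in `h` (allocated or referred to). -/
def ref (h : Heap I) : Set I.Loc :=
  dom h ∪ {l | ∃ l0 vs, h.1 l0 = some vs ∧ (⟨σ.loc, l⟩ : I.Val) ∈ vs}

end Heap

section PureSem

variable {I : Interp σ}

/-- Satisfaction of a pure atom (depends only on the store). -/
def PAtom.holds (st : Store I) : PAtom σ → Prop
  | .eq t u => tval st t = tval st u
  | .ne t u => tval st t ≠ tval st u

/-- Satisfaction of a pure formula (depends only on the store). -/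
def pureHolds (st : Store I) (ξ : PureF σ) : Prop := ∀ a ∈ ξ, PAtom.holds st a

/-- The store `s ∘ σ` mapping every variable `x` to `s(σ(x))`. -/
def Store.comp (st : Store I) (θ : Subst σ) : Store I :=
  fun s n => (θ.sorted s n) ▸ tvalSorted st (θ.app s n)

end PureSem

/-! ## Satisfaction -/

mutual
  /-- Satisfaction of a single spatial atom; predicate atoms are interpreted by
  unfolding with the rules of `R` (least fixpoint). -/
  inductive SatA (R : Set (Rule σ)) (I : Interp σ) : Store I → Heap I → SAtom σ → Prop where
    | pto (st : Store I) (x : ℕ) (ts : List (Term σ)) :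
        SatA R I st (Heap.single (st σ.loc x) (ts.map (tval st))) (SAtom.pto x ts)
    | pred (st : Store I) (h : Heap I) (p : σ.Pred) (x : ℕ) (args : List (Term σ))
        (r : Rule σ) (st' : Store I) :
        r ∈ R → r.head = p →
        tval st' (r.paramTerm 0) = tval st (Term.var σ.loc x) →
        (∀ (i : ℕ) (hi : i < args.length),
          tval st' (r.paramTerm (i + 1)) = tval st (args[i]'hi)) →
        SatS R I st' h r.body.sp →
        pureHolds st' r.body.pu →
        SatA R I st h (SAtom.pred p x args)

  /-- Satisfaction of a spatial formula: the heap splits into disjoint parts,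
  one per atom. -/
  inductive SatS (R : Set (Rule σ)) (I : Interp σ) : Store I → Heap I → Spatial σ → Prop where
    | emp (st : Store I) : SatS R I st (Heap.empty I) 0
    | cons (st : Store I) (h1 h2 : Heap I) (a : SAtom σ) (φ : Spatial σ) :
        SatA R I st h1 a → SatS R I st h2 φ → Heap.Disj h1 h2 →
        SatS R I st (Heap.union h1 h2) (a ::ₘ φ)
end

/-- Satisfaction `(s,h) ⊨_ℜ φ ⋏ ξ` of a symbolic heap. -/
def SatH (R : Set (Rule σ)) (I : Interp σ) (st : Store I) (h : Heap I) (l : SymHeap σ) : Prop :=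
  SatS R I st h l.sp ∧ pureHolds st l.pu

/-! ## Classes of rule sets -/

/-- A deterministic set of rules: two distinct rules with the same head never
overlap (the conjunction of the equations identifying their parameters and
points-to tuples with their pure constraints is unsatisfiable; the two rules
are renamed apart, whence the two independent stores). -/
def Deterministic (R : Set (Rule σ)) (I : Interp σ) : Prop :=
  ∀ r1 ∈ R, ∀ r2 ∈ R, r1 ≠ r2 → r1.head = r2.head →
  ∀ (ys1 : List (Term σ)) (ps1 : Multiset (SAtom σ))
    (ys2 : List (Term σ)) (ps2 : Multiset (SAtom σ)),
    r1.body.sp = (SAtom.pto (r1.param 0) ys1) ::ₘ ps1 →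
    r2.body.sp = (SAtom.pto (r2.param 0) ys2) ::ₘ ps2 →
    ¬ ∃ st1 st2 : Store I,
      (∀ i < σ.arity r1.head, tval st1 (r1.paramTerm i) = tval st2 (r2.paramTerm i)) ∧
      ys1.map (tval st1) = ys2.map (tval st2) ∧
      pureHolds st1 r1.body.pu ∧ pureHolds st2 r2.body.pu

/-- The standing hypotheses: `R` is a nonempty loc-deterministic set of P-rules
satisfying Assumptions 1 (every predicate is productive) and 2 (every loc-sorted
parameter index `i ≥ 2`, here 0-indexed `i ≥ 1`, is an outgoing parameter index),
in which every constant occurs. -/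
structure GoodRules (R : Set (Rule σ)) (I : Interp σ) : Prop where
  nonempty : R.Nonempty
  prules : ∀ r ∈ R, Rule.IsPRule r
  deterministic : Deterministic R I
  loc_diseq : ∀ r ∈ R, ∀ pa ∈ r.body.pu,
    ∃ x y : ℕ, pa = PAtom.ne (Term.var σ.loc x) (Term.var σ.loc y)
  productive : ∀ p : σ.Pred, Productive R p
  out_total : ∀ (p : σ.Pred) (i : ℕ), 1 ≤ i → i < σ.arity p → σ.psort p i = σ.loc →
    OutParam R p i
  const_occurs : ∀ (s : σ.Srt) (c : σ.Const s), ∃ r ∈ R, Term.cst s c ∈ Rule.termSet r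

/-! ## Sequents -/

/-- A sequent `λ ⊢_ℜ^V γ`. -/
structure Sequent (σ : Sig) : Type where
  lhs : SymHeap σ
  rhs : SymHeap σ
  V : Multiset ℕ

/-- A store is injective on a multiset `V` of loc-variables:
`{x,y} ⊆ₘ V → s(x) ≠ s(y)`. -/
def StoreInjOn {I : Interp σ} (st : Store I) (V : Multiset ℕ) : Prop :=
  ∀ x y : ℕ, ({x, y} : Multiset ℕ) ≤ V → st σ.loc x ≠ st σ.loc y

/-- A counter-model of a sequent. -/
def CounterModel (R : Set (Rule σ)) (I : Interp σ) (S : Sequent σ)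
    (st : Store I) (h : Heap I) : Prop :=
  SatH R I st h S.lhs ∧ ¬ SatH R I st h S.rhs ∧
  (∀ x ∈ S.V, st σ.loc x ∉ Heap.dom h) ∧ StoreInjOn st S.V

/-- Validity of a sequent: no counter-model. -/
def SeqValid (R : Set (Rule σ)) (I : Interp σ) (S : Sequent σ) : Prop :=
  ¬ ∃ (st : Store I) (h : Heap I), CounterModel R I S st h

/-- Axioms (modulo AC): `φ ⋏ (ξ ∧ ξ') ⊢ φ ⋏ ξ`; `φ ⋏ (ξ ∧ x ≉ x) ⊢ γ`;
a heap-unsatisfiable left-hand side; an allocated variable in `V`, or a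
repeated variable in `V`. -/
def IsAxiom (S : Sequent σ) : Prop :=
  (S.lhs.sp = S.rhs.sp ∧ ∀ a ∈ S.rhs.pu, a ∈ S.lhs.pu) ∨
  (∃ v : Vr σ, PAtom.ne (Term.var v.1 v.2) (Term.var v.1 v.2) ∈ S.lhs.pu) ∨
  (¬ (alloc S.lhs.sp).Nodup) ∨
  (∃ x ∈ alloc S.lhs.sp, x ∈ S.V) ∨
  (¬ S.V.Nodup)

/-- The relation `λ ▷_V ξ` (Definition of `▷`). -/
def Entails (lam : SymHeap σ) (V : Multiset ℕ) (ξ : PureF σ) : Prop :=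
  ∀ ζ ∈ ξ,
    ζ ∈ lam.pu ∨
    (∃ v : Vr σ, ζ = PAtom.eq (Term.var v.1 v.2) (Term.var v.1 v.2)) ∨
    (∃ (s1 : σ.Srt) (c1 : σ.Const s1) (s2 : σ.Srt) (c2 : σ.Const s2),
      ζ = PAtom.ne (Term.cst s1 c1) (Term.cst s2 c2) ∧ Term.cst s1 c1 ≠ Term.cst s2 c2) ∨
    (∃ x1 x2 : ℕ, ζ = PAtom.ne (Term.var σ.loc x1) (Term.var σ.loc x2) ∧
      ({x1, x2} : Multiset ℕ) ≤ SymHeap.alloc lam + V)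

/-- A `→`-compatible model of a spatial formula. -/
def PathCompatible (R : Set (Rule σ)) (I : Interp σ) (st : Store I) (h : Heap I)
    (φ : Spatial σ) : Prop :=
  SatS R I st h φ ∧
  ∀ x y : ℕ, Relation.ReflTransGen (Heap.conn h) (st σ.loc x) (st σ.loc y) →
    Relation.ReflTransGen (PathTo R φ) x y

/-! ## 𝔘-mappings -/

/-- A `𝔘`-mapping: a sort-preserving map on the universe fixing the
interpretations of constants. -/
structure UMap {σ : Sig} (I : Interp σ) : Type where
  f : ∀ s : σ.Srt, I.U s → I.U s
  fix_const : ∀ (s : σ.Srt) (c : σ.Const s), f s (I.cval c) = I.cval c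

/-- A `𝔘`-mapping, as a map on `𝔘`. -/
def UMap.onVal {σ : Sig} {I : Interp σ} (ν : UMap I) : I.Val → I.Val :=
  fun v => ⟨v.1, ν.f v.1 v.2⟩

/-- The store `ν ∘ s`. -/
def UMap.compStore {σ : Sig} {I : Interp σ} (ν : UMap I) (st : Store I) : Store I :=
  fun s n => ν.f s (st s n)

/-! Satisfaction only sees the values of the variables of a formula, and, as there are no
constants of sort `loc`, it is invariant under permutations of `𝔘_loc`. Hence a counter-model
can be moved by a permutation sending the finitely many relevant locations (the values of the
variables of the sequent, one default value and the domain of the heap) into `U`, after which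
every irrelevant loc-variable is redirected to the default value. -/

open Cardinal in
theorem exists_perm_mapsTo_of_finite {α : Type*} {B U : Set α} (hB : B.Finite)
    (hU : U.Infinite) : ∃ e : Equiv.Perm α, Set.MapsTo e B U := by
  have := hB.to_subtype
  have := hU.to_subtype
  have hBU : #B < #U := (lt_aleph0_of_finite B).trans_le (aleph0_le_mk U)
  obtain ⟨f⟩ := hBU.le
  obtain ⟨e, he⟩ := extend_function_of_lt (f.trans (Function.Embedding.subtype U))
    (hBU.trans_le (mk_set_le U)) ⟨Equiv.refl α⟩
  exact ⟨e, fun b hb => (he ⟨b, hb⟩).symm ▸ (f ⟨b, hb⟩).2⟩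

section UMap

variable {I : Interp σ}

theorem tval_compStore (ν : UMap I) (st : Store I) (t : Term σ) :
    tval (ν.compStore st) t = ν.onVal (tval st t) := by
  cases t with
  | var s n => rfl
  | cst s c => exact congrArg (Sigma.mk s) (ν.fix_const s c).symm

theorem pureHolds_compStore {ν : UMap I} (hν : Function.Injective ν.onVal) {st : Store I}
    {ξ : PureF σ} (H : pureHolds st ξ) : pureHolds (ν.compStore st) ξ := by
  intro a ha
  have hsat := H a ha
  cases a with
  | eq t u =>
    show tval _ t = tval _ u
    rw [tval_compStore, tval_compStore]
    exact congrArg _ hsat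
  | ne t u =>
    show tval _ t ≠ tval _ u
    rw [tval_compStore, tval_compStore]
    exact fun hval => hsat (hν hval)

noncomputable def UMap.ofLocPerm (e : Equiv.Perm I.Loc) : UMap I where
  f s := if h : s = σ.loc then h ▸ e else id
  fix_const s c := by
    split_ifs with h
    · subst h
      exact (σ.noLocConst.false c).elim
    · rfl

@[simp]
theorem UMap.ofLocPerm_loc (e : Equiv.Perm I.Loc) (l : I.Loc) :
    (UMap.ofLocPerm e).f σ.loc l = e l := by
  simp [UMap.ofLocPerm]

@[simp]
theorem UMap.ofLocPerm_compStore_loc (e : Equiv.Perm I.Loc) (st : Store I) (n : ℕ) :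
    (UMap.ofLocPerm e).compStore st σ.loc n = e (st σ.loc n) :=
  UMap.ofLocPerm_loc e _

theorem UMap.ofLocPerm_symm_apply (e : Equiv.Perm I.Loc) (s : σ.Srt) (x : I.U s) :
    (UMap.ofLocPerm e.symm).f s ((UMap.ofLocPerm e).f s x) = x := by
  by_cases h : s = σ.loc
  · subst h
    simp
  · simp [UMap.ofLocPerm, h]

theorem UMap.ofLocPerm_symm_onVal (e : Equiv.Perm I.Loc) (v : I.Val) :
    (UMap.ofLocPerm e.symm).onVal ((UMap.ofLocPerm e).onVal v) = v :=
  congrArg (Sigma.mk v.1) (UMap.ofLocPerm_symm_apply e v.1 v.2)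

theorem UMap.ofLocPerm_onVal_injective (e : Equiv.Perm I.Loc) :
    Function.Injective (UMap.ofLocPerm e).onVal :=
  Function.LeftInverse.injective (UMap.ofLocPerm_symm_onVal e)

theorem UMap.ofLocPerm_symm_compStore (e : Equiv.Perm I.Loc) (st : Store I) :
    (UMap.ofLocPerm e.symm).compStore ((UMap.ofLocPerm e).compStore st) = st := by
  funext s n
  exact UMap.ofLocPerm_symm_apply e s (st s n)

end UMap

namespace Heap

variable {I : Interp σ}

noncomputable def mapLoc (e : Equiv.Perm I.Loc) (h : Heap I) : Heap I :=
  ⟨fun l => (h.1 (e.symm l)).map (List.map (UMap.ofLocPerm e).onVal),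
    (h.2.image e).subset fun l hl => ⟨e.symm l, by simpa using hl, e.apply_symm_apply l⟩⟩

theorem dom_mapLoc (e : Equiv.Perm I.Loc) (h : Heap I) : dom (h.mapLoc e) = e '' dom h := by
  ext l
  simp only [dom, mapLoc, Set.mem_ofPred_eq, ne_eq, Option.map_eq_none_iff,
    ← e.eq_symm_apply, exists_eq_right, Set.mem_image]

theorem mapLoc_single (e : Equiv.Perm I.Loc) (l : I.Loc) (vs : List I.Val) :
    (single l vs).mapLoc e = single (e l) (vs.map (UMap.ofLocPerm e).onVal) := by
  apply Subtype.ext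
  funext l'
  simp only [mapLoc, single, e.symm_apply_eq]
  split_ifs <;> rfl

theorem mapLoc_union (e : Equiv.Perm I.Loc) (h1 h2 : Heap I) :
    (h1.union h2).mapLoc e = (h1.mapLoc e).union (h2.mapLoc e) := by
  apply Subtype.ext
  funext l
  simp only [mapLoc, union]
  cases h1.1 (e.symm l) <;> rfl

theorem Disj.mapLoc (e : Equiv.Perm I.Loc) {h1 h2 : Heap I} (hd : h1.Disj h2) :
    (h1.mapLoc e).Disj (h2.mapLoc e) := by
  rw [Disj, dom_mapLoc, dom_mapLoc, ← Set.image_inter e.injective, hd, Set.image_empty]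

theorem mapLoc_symm_mapLoc (e : Equiv.Perm I.Loc) (h : Heap I) :
    (h.mapLoc e).mapLoc e.symm = h := by
  apply Subtype.ext
  funext l
  simp [mapLoc, Option.map_map, Function.comp_def, UMap.ofLocPerm_symm_onVal]

end Heap

section Invariance

variable {R : Set (Rule σ)} {I : Interp σ}

theorem SatS.mapLoc (e : Equiv.Perm I.Loc) {st : Store I} {h : Heap I} {φ : Spatial σ}
    (H : SatS R I st h φ) : SatS R I ((UMap.ofLocPerm e).compStore st) (h.mapLoc e) φ := by
  induction H using SatS.rec
    (motive_1 := fun st h a _ => SatA R I ((UMap.ofLocPerm e).compStore st) (h.mapLoc e) a) with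
  | pto st x ts =>
    have hts : (ts.map (tval st)).map (UMap.ofLocPerm e).onVal
        = ts.map (tval ((UMap.ofLocPerm e).compStore st)) := by
      rw [List.map_map]
      exact List.map_congr_left fun t _ => (tval_compStore _ st t).symm
    rw [Heap.mapLoc_single, hts, ← UMap.ofLocPerm_loc e]
    exact SatA.pto _ x ts
  | pred st h p x args r st' hr hhead hroot hargs _ hpure ih =>
    refine SatA.pred _ _ p x args r _ hr hhead ?_ (fun i hi => ?_) ih
      (pureHolds_compStore (UMap.ofLocPerm_onVal_injective e) hpure)
    · rw [tval_compStore, tval_compStore, hroot]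
    · rw [tval_compStore, tval_compStore, hargs i hi]
  | emp st => exact SatS.emp _
  | cons st h1 h2 a φ _ _ hd ihA ihS =>
    rw [Heap.mapLoc_union]
    exact SatS.cons _ _ _ _ _ ihA ihS (hd.mapLoc e)

theorem SatH.mapLoc (e : Equiv.Perm I.Loc) {st : Store I} {h : Heap I} {l : SymHeap σ}
    (H : SatH R I st h l) : SatH R I ((UMap.ofLocPerm e).compStore st) (h.mapLoc e) l :=
  ⟨H.1.mapLoc e, pureHolds_compStore (UMap.ofLocPerm_onVal_injective e) H.2⟩

theorem satH_mapLoc_iff (e : Equiv.Perm I.Loc) {st : Store I} {h : Heap I} {l : SymHeap σ} :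
    SatH R I ((UMap.ofLocPerm e).compStore st) (h.mapLoc e) l ↔ SatH R I st h l := by
  refine ⟨fun H => ?_, SatH.mapLoc e⟩
  simpa only [UMap.ofLocPerm_symm_compStore, Heap.mapLoc_symm_mapLoc] using H.mapLoc e.symm

theorem CounterModel.mapLoc (e : Equiv.Perm I.Loc) {S : Sequent σ} {st : Store I}
    {h : Heap I} (H : CounterModel R I S st h) :
    CounterModel R I S ((UMap.ofLocPerm e).compStore st) (h.mapLoc e) := by
  obtain ⟨hlhs, hrhs, hVdom, hVinj⟩ := H
  refine ⟨hlhs.mapLoc e, (satH_mapLoc_iff e).not.mpr hrhs, fun x hx => ?_,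
    fun x y hxy => ?_⟩
  · rw [UMap.ofLocPerm_compStore_loc, Heap.dom_mapLoc, e.injective.mem_set_image]
    exact hVdom x hx
  · simpa only [UMap.ofLocPerm_compStore_loc] using e.injective.ne (hVinj x y hxy)

end Invariance

section Agreement

variable {R : Set (Rule σ)} {I : Interp σ}

def AgreeOn (st st' : Store I) (F : Set (Vr σ)) : Prop :=
  ∀ v ∈ F, st v.1 v.2 = st' v.1 v.2

theorem AgreeOn.symm {st st' : Store I} {F : Set (Vr σ)} (hag : AgreeOn st st' F) :
    AgreeOn st' st F :=
  fun v hv => (hag v hv).symm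

theorem AgreeOn.mono {st st' : Store I} {F G : Set (Vr σ)} (hag : AgreeOn st st' F)
    (hGF : G ⊆ F) : AgreeOn st st' G :=
  fun v hv => hag v (hGF hv)

theorem AgreeOn.tval_eq {st st' : Store I} {t : Term σ} (hag : AgreeOn st st' t.varSet) :
    tval st t = tval st' t := by
  cases t with
  | var s n => exact congrArg (Sigma.mk s) (hag (s, n) rfl)
  | cst s c => rfl

theorem AgreeOn.pureHolds {st st' : Store I} {ξ : PureF σ} (hag : AgreeOn st st' ξ.varSet)
    (H : pureHolds st ξ) : pureHolds st' ξ := by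
  intro a ha
  have hterm : ∀ t ∈ a.termSet, tval st t = tval st' t := fun t ht =>
    (hag.mono fun v hv => ⟨a, ha, Set.mem_biUnion ht hv⟩).tval_eq
  have hsat := H a ha
  cases a with
  | eq t u =>
    show tval st' t = tval st' u
    rwa [← hterm t (by simp [PAtom.termSet]), ← hterm u (by simp [PAtom.termSet])]
  | ne t u =>
    show tval st' t ≠ tval st' u
    rwa [← hterm t (by simp [PAtom.termSet]), ← hterm u (by simp [PAtom.termSet])]

theorem AgreeOn.satA {st st' : Store I} {h : Heap I} {a : SAtom σ}
    (hag : AgreeOn st st' a.varSet) (H : SatA R I st h a) : SatA R I st' h a := by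
  have hterm : ∀ t ∈ a.termSet, tval st t = tval st' t := fun t ht =>
    (hag.mono fun _ hv => Set.mem_biUnion ht hv).tval_eq
  cases H with
  | pto _ x ts =>
    have hroot := hterm (Term.var σ.loc x) (Set.mem_insert _ _)
    have hts : ts.map (tval st) = ts.map (tval st') :=
      List.map_congr_left fun t ht => hterm t (Set.mem_insert_of_mem _ ht)
    rw [show st σ.loc x = st' σ.loc x from eq_of_heq (Sigma.mk.inj hroot).2, hts]
    exact SatA.pto st' x ts
  | pred _ _ p x args r st₂ hr hhead hroot hargs hbody hpure =>
    refine SatA.pred st' h p x args r st₂ hr hhead ?_ (fun i hi => ?_) hbody hpure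
    · rw [hroot, hterm _ (Set.mem_insert _ _)]
    · rw [hargs i hi, hterm _ (Set.mem_insert_of_mem _ (args.getElem_mem hi))]

theorem AgreeOn.satS {st st' : Store I} {h : Heap I} {φ : Spatial σ}
    (hag : AgreeOn st st' (Spatial.varSet φ)) (H : SatS R I st h φ) : SatS R I st' h φ := by
  induction H using SatS.rec (motive_1 := fun _ _ _ _ => True) with
  | pto | pred => trivial
  | emp st => exact SatS.emp st'
  | cons st h1 h2 a φ hA _ hd _ ihS =>
    refine SatS.cons st' h1 h2 a φ ?_ ?_ hd
    · exact (hag.mono fun _ hv => ⟨a, Multiset.mem_cons_self a φ, hv⟩).satA hA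
    · exact ihS (hag.mono fun _ ⟨b, hb, hv⟩ => ⟨b, Multiset.mem_cons_of_mem hb, hv⟩)

theorem AgreeOn.satH {st st' : Store I} {h : Heap I} {l : SymHeap σ}
    (hag : AgreeOn st st' l.varSet) (H : SatH R I st h l) : SatH R I st' h l :=
  ⟨(hag.mono Set.subset_union_left).satS H.1, (hag.mono Set.subset_union_right).pureHolds H.2⟩

noncomputable def Store.collapse (st : Store I) (F : Set (Vr σ)) : Store I :=
  fun s n => if (s, n) ∈ F then st s n else st s 0

theorem agreeOn_collapse (st : Store I) (F : Set (Vr σ)) : AgreeOn st (st.collapse F) F :=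
  fun _ hv => (if_pos hv).symm

theorem range_collapse_subset (st : Store I) (F : Set (Vr σ)) (s : σ.Srt) :
    Set.range (st.collapse F s) ⊆ st s '' insert 0 {n | (s, n) ∈ F} := by
  rintro _ ⟨n, rfl⟩
  by_cases hn : (s, n) ∈ F
  · exact ⟨n, Or.inr hn, (if_pos hn).symm⟩
  · exact ⟨0, Or.inl rfl, (if_neg hn).symm⟩

end Agreement

section Finiteness

theorem Term.varSet_finite (t : Term σ) : t.varSet.Finite := by
  cases t <;> simp [Term.varSet]

theorem SAtom.varSet_finite (a : SAtom σ) : a.varSet.Finite := by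
  refine Set.Finite.biUnion ?_ fun t _ => t.varSet_finite
  cases a with
  | pto x ts => exact ts.finite_toSet.insert _
  | pred p x args => exact args.finite_toSet.insert _

theorem PAtom.varSet_finite (a : PAtom σ) : a.varSet.Finite := by
  refine Set.Finite.biUnion ?_ fun t _ => t.varSet_finite
  cases a <;> exact (Set.finite_singleton _).insert _

theorem Spatial.varSet_finite (φ : Spatial σ) : (Spatial.varSet φ).Finite :=
  (φ.finite_toSet.biUnion fun a _ => a.varSet_finite).subset
    fun _ ⟨_, ha, hv⟩ => Set.mem_biUnion ha hv

theorem PureF.varSet_finite (ξ : PureF σ) : (PureF.varSet ξ).Finite :=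
  (ξ.finite_toSet.biUnion fun a _ => a.varSet_finite).subset
    fun _ ⟨_, ha, hv⟩ => Set.mem_biUnion ha hv

theorem SymHeap.varSet_finite (l : SymHeap σ) : l.varSet.Finite :=
  (Spatial.varSet_finite l.sp).union (PureF.varSet_finite l.pu)

end Finiteness

def Sequent.varSet (S : Sequent σ) : Set (Vr σ) :=
  S.lhs.varSet ∪ S.rhs.varSet ∪ (fun x => (σ.loc, x)) '' {x | x ∈ S.V}

theorem Sequent.varSet_finite (S : Sequent σ) : S.varSet.Finite :=
  (S.lhs.varSet_finite.union S.rhs.varSet_finite).union (S.V.finite_toSet.image _)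

theorem CounterModel.of_agreeOn {R : Set (Rule σ)} {I : Interp σ} {S : Sequent σ}
    {st st' : Store I} {h : Heap I} (hag : AgreeOn st st' S.varSet)
    (H : CounterModel R I S st h) : CounterModel R I S st' h := by
  obtain ⟨hlhs, hrhs, hVdom, hVinj⟩ := H
  have hV : ∀ x ∈ S.V, st σ.loc x = st' σ.loc x := fun x hx =>
    hag (σ.loc, x) (Or.inr ⟨x, hx, rfl⟩)
  refine ⟨(hag.mono fun _ hv => Or.inl (Or.inl hv)).satH hlhs,
    fun H => hrhs ((hag.symm.mono fun _ hv => Or.inl (Or.inr hv)).satH H),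
    fun x hx => hV x hx ▸ hVdom x hx, fun x y hxy => ?_⟩
  rw [← hV x (Multiset.mem_of_le hxy (by simp)), ← hV y (Multiset.mem_of_le hxy (by simp))]
  exact hVinj x y hxy

/-- every non-valid equality-free sequent admits a counter-model
`(s,h)` with `dom(h) ∪ s(V_loc) ⊆ U`, for any infinite `U ⊆ 𝔘_loc`. -/
theorem STATEMENT_14 {σ : Sig} {I : Interp σ} (R : Set (Rule σ)) (hR : GoodRules R I)
    (U : Set I.Loc) (hU : U.Infinite)
    (S : Sequent σ)
    (heqf1 : ∀ t u : Term σ, PAtom.eq t u ∉ S.lhs.pu)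
    (heqf2 : ∀ t u : Term σ, PAtom.eq t u ∉ S.rhs.pu)
    (hnv : ¬ SeqValid R I S) :
    ∃ (st : Store I) (h : Heap I), CounterModel R I S st h ∧
      Heap.dom h ⊆ U ∧ Set.range (st σ.loc) ⊆ U := by
  obtain ⟨st, h, hcm⟩ := not_not.mp hnv
  set B : Set I.Loc := st σ.loc '' insert 0 {n | (σ.loc, n) ∈ S.varSet} ∪ Heap.dom h
  have hB : B.Finite :=
    (((S.varSet_finite.preimage (Prod.mk_right_injective σ.loc).injOn).insert 0).image _).union
      h.2
  obtain ⟨e, he⟩ := exists_perm_mapsTo_of_finite hB hU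
  refine ⟨_, _, (hcm.of_agreeOn (agreeOn_collapse st S.varSet)).mapLoc e, ?_, ?_⟩
  · rw [Heap.dom_mapLoc]
    exact (he.mono_left Set.subset_union_right).image_subset
  · rintro _ ⟨n, rfl⟩
    rw [UMap.ofLocPerm_compStore_loc]
    exact he (Or.inl (range_collapse_subset st S.varSet σ.loc ⟨n, rfl⟩))

end SLID
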